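/- arXiv:0711.1359 — 7 statements merged into one kernel-verified Lean document; each statement's English description precedes it below -/
import Mathlib

section
/- Let E ⊂ ℝⁿ with n ≥ 2 be a set, and f : E → ℝ a function such that |f(x) − f(y)| ≤ C ‖x − y‖ⁿ for all x, y ∈ E and some constant C. Then f(E) has Lebesgue measure zero in ℝ. -/
/-!
At a Lebesgue density point `x` of `S`, for small `d` the set `S` meets every ball of radius
`d / k` centred within distance `d` of `x`. Hence `x` and any `y ∈ S` at distance `d` are joined
through points of `S` by a chain of `k + 2` steps of length at most `3d / k`, and summing the
hypothesis along it gives `|f x - f y| ≤ (k + 2) C (3d / k) ^ n`; as `n ≥ 2`, this is `o(d ^ n)`.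
A Besicovitch covering of a set on which `|f y - f x| ≤ q r ^ n` on small balls `B(x, r)` maps to a
covering of its image by intervals of length `2 q r ^ n`, so the image has measure at most `2 q`
times that of the set, in units of the unit ball. Letting `q → 0` on the density points, and using
that the remaining points of `S` form a null set, gives the result.
-/

open MeasureTheory Metric Set Filter Asymptotics Module
open scoped ENNReal Topology

section

theorem add_two_mul_div_pow_le {k : ℝ} (hk : 1 ≤ k) {n : ℕ} (hn : 2 ≤ n) :
    (k + 2) * (3 / k) ^ n ≤ 3 ^ (n + 1) / k := by
  have hk0 : 0 < k := one_pos.trans_le hk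
  rw [div_pow, le_div_iff₀ hk0, pow_succ]
  calc (k + 2) * (3 ^ n / k ^ n) * k = 3 ^ n * ((k + 2) * k / k ^ n) := by ring
    _ ≤ 3 ^ n * 3 := by
      gcongr
      rw [div_le_iff₀ (by positivity)]
      calc (k + 2) * k ≤ 3 * k ^ 2 := by nlinarith
        _ ≤ 3 * k ^ n := by gcongr

variable {E : Type*} [NormedAddCommGroup E] [NormedSpace ℝ E]

theorem abs_sub_le_of_forall_nonempty_inter_closedBall {S : Set E} {f : E → ℝ} {C : ℝ}
    {n k : ℕ} (hC : 0 ≤ C) (hk : 0 < k) (hf : ∀ x ∈ S, ∀ y ∈ S, |f x - f y| ≤ C * dist x y ^ n)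
    {x y : E} (hx : x ∈ S) (hy : y ∈ S)
    (hS : ∀ p ∈ closedBall x (dist x y), (S ∩ closedBall p (dist x y / k)).Nonempty) :
    |f x - f y| ≤ (k + 2) * (C * (3 * dist x y / k) ^ n) := by
  set d := dist x y
  set p : ℕ → E := fun i => AffineMap.lineMap x y ((i : ℝ) / k)
  have hk' : (0 : ℝ) < k := Nat.cast_pos.2 hk
  have hp : ∀ i ≤ k, p i ∈ closedBall x d := by
    intro i hi
    rw [mem_closedBall, dist_lineMap_left, Real.norm_of_nonneg (by positivity)]
    exact mul_le_of_le_one_left dist_nonneg ((div_le_one hk').2 (by exact_mod_cast hi))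
  choose! z hzS hz using fun i (hi : i ≤ k) => hS (p i) (hp i hi)
  have hlink : ∀ a ∈ S, ∀ b ∈ S, dist a b ≤ 3 * d / k → dist (f a) (f b) ≤ C * (3 * d / k) ^ n :=
    fun a ha b hb hab => (hf a ha b hb).trans (by gcongr)
  have h3 : 3 * d / k = d / k + d / k + d / k := by ring
  have hdk : 0 ≤ d / k := by positivity
  have hx0 : dist x (z 0) ≤ 3 * d / k := by
    have : p 0 = x := by simp [p]
    rw [dist_comm, ← this]
    linarith [mem_closedBall.1 (hz 0 (Nat.zero_le k))]
  have hyk : dist (z k) y ≤ 3 * d / k := by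
    have : p k = y := by simp [p, hk'.ne']
    rw [← this]
    linarith [mem_closedBall.1 (hz k le_rfl)]
  have hstep : ∀ i < k, dist (z i) (z (i + 1)) ≤ 3 * d / k := by
    intro i hi
    have hpp : dist (p i) (p (i + 1)) = d / k := by
      simp only [p, dist_lineMap_lineMap, Real.dist_eq]
      rw [Nat.cast_succ, ← sub_div, sub_add_cancel_left, abs_div, abs_neg, abs_one, abs_of_pos hk']
      ring
    linarith [dist_triangle4 (z i) (p i) (p (i + 1)) (z (i + 1)),
      mem_closedBall.1 (hz i hi.le), mem_closedBall'.1 (hz (i + 1) hi)]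
  have hchain : dist (f (z 0)) (f (z k)) ≤ k * (C * (3 * d / k) ^ n) :=
    calc dist (f (z 0)) (f (z k))
        ≤ ∑ i ∈ Finset.range k, dist (f (z i)) (f (z (i + 1))) := dist_le_range_sum_dist (f ∘ z) k
      _ ≤ ∑ _i ∈ Finset.range k, C * (3 * d / k) ^ n := Finset.sum_le_sum fun i hi =>
          hlink _ (hzS i (Finset.mem_range.1 hi).le) _ (hzS (i + 1) (Finset.mem_range.1 hi))
            (hstep i (Finset.mem_range.1 hi))
      _ = k * (C * (3 * d / k) ^ n) := by simp
  rw [← Real.dist_eq]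
  linarith [dist_triangle4 (f x) (f (z 0)) (f (z k)) (f y),
    hlink x hx _ (hzS 0 (Nat.zero_le k)) hx0, hlink _ (hzS k le_rfl) y hy hyk]

section Haar

variable [MeasurableSpace E] [BorelSpace E] [FiniteDimensional ℝ E] (μ : Measure E)
  [μ.IsAddHaarMeasure]

theorem eventually_nonempty_inter_closedBall_of_density_one {S : Set E} {x : E}
    (hx : Tendsto (fun r => μ (S ∩ closedBall x r) / μ (closedBall x r)) (𝓝[>] 0) (𝓝 1))
    {t : ℝ} (ht : 0 < t) :
    ∀ᶠ ρ in 𝓝[>] 0, ∀ p, closedBall p (t * ρ) ⊆ closedBall x ρ →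
      (S ∩ closedBall p (t * ρ)).Nonempty := by
  set c := ENNReal.ofReal (t ^ finrank ℝ E)
  have hc : c ≠ 0 := by simpa [c] using pow_pos ht _
  have hlt : 1 - c < 1 := ENNReal.sub_lt_self ENNReal.one_ne_top one_ne_zero hc
  filter_upwards [hx (Ioi_mem_nhds hlt), self_mem_nhdsWithin] with ρ hρ (hρ0 : 0 < ρ) p hp
  by_contra hempty
  have hB0 : μ (closedBall x ρ) ≠ 0 := (measure_closedBall_pos μ x hρ0).ne'
  have hBtop : μ (closedBall x ρ) ≠ ∞ := measure_closedBall_lt_top.ne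
  have hball : μ (closedBall p (t * ρ)) = c * μ (closedBall x ρ) := by
    rw [Measure.addHaar_closedBall_mul μ p ht.le hρ0.le, Measure.addHaar_closedBall_center μ x]
  have hsub : S ∩ closedBall x ρ ⊆ closedBall x ρ \ closedBall p (t * ρ) := fun z hz =>
    ⟨hz.2, fun hz' => hempty ⟨z, hz.1, hz'⟩⟩
  have hle : μ (S ∩ closedBall x ρ) ≤ (1 - c) * μ (closedBall x ρ) :=
    calc μ (S ∩ closedBall x ρ) ≤ μ (closedBall x ρ \ closedBall p (t * ρ)) := measure_mono hsub
      _ = μ (closedBall x ρ) - c * μ (closedBall x ρ) := by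
        rw [measure_sdiff hp measurableSet_closedBall.nullMeasurableSet
          measure_closedBall_lt_top.ne, hball]
      _ = (1 - c) * μ (closedBall x ρ) := by rw [ENNReal.sub_mul fun _ _ => hBtop, one_mul]
  exact ((ENNReal.lt_div_iff_mul_lt (Or.inl hB0) (Or.inl hBtop)).1 hρ).not_ge hle

theorem isLittleO_sub_of_density_one {S : Set E} {f : E → ℝ} {C : ℝ} {n : ℕ} (hn : 2 ≤ n)
    (hC : 0 ≤ C) (hf : ∀ x ∈ S, ∀ y ∈ S, |f x - f y| ≤ C * dist x y ^ n) {x : E} (hxS : x ∈ S)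
    (hx : Tendsto (fun r => μ (S ∩ closedBall x r) / μ (closedBall x r)) (𝓝[>] 0) (𝓝 1)) :
    (fun y => f y - f x) =o[𝓝[S] x] fun y => dist y x ^ n := by
  refine isLittleO_iff.2 fun ε hε => ?_
  obtain ⟨k, hk⟩ := exists_nat_gt (3 ^ (n + 1) * C / ε)
  have hk' : (0 : ℝ) < k := (by positivity : (0 : ℝ) ≤ 3 ^ (n + 1) * C / ε).trans_lt hk
  have hk1 : (1 : ℝ) ≤ k := Nat.one_le_cast.2 (Nat.cast_pos.1 hk')
  obtain ⟨δ, hδ, hdense⟩ := mem_nhdsGT_iff_exists_Ioo_subset.1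
    (eventually_nonempty_inter_closedBall_of_density_one μ hx (t := 1 / (2 * k)) (by positivity))
  filter_upwards [self_mem_nhdsWithin,
    mem_nhdsWithin_of_mem_nhds (ball_mem_nhds x (half_pos hδ))] with y hyS hyx
  rcases eq_or_ne y x with rfl | hne
  · simp [zero_pow (by omega : n ≠ 0)]
  have hd : 0 < dist x y := dist_pos.2 hne.symm
  have hchain := abs_sub_le_of_forall_nonempty_inter_closedBall hC (Nat.cast_pos.1 hk') hf hxS hyS
    fun p hp => by
      have hr : 1 / (2 * k) * (2 * dist x y) = dist x y / k := by field_simp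
      rw [← hr]
      refine hdense ⟨by positivity, ?_⟩ p (closedBall_subset_closedBall' ?_)
      · rw [mem_ball, dist_comm] at hyx; linarith
      · rw [hr]
        linarith [mem_closedBall.1 hp, div_le_self hd.le hk1]
  rw [Real.norm_eq_abs, Real.norm_of_nonneg (by positivity), abs_sub_comm, dist_comm]
  have hCk : 3 ^ (n + 1) * C / k ≤ ε := by
    rw [div_le_iff₀ hk']
    rw [div_lt_iff₀ hε] at hk
    linarith
  refine hchain.trans ?_
  calc ((k : ℝ) + 2) * (C * (3 * dist x y / k) ^ n)
      = C * dist x y ^ n * ((k + 2) * (3 / k) ^ n) := by ring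
    _ ≤ C * dist x y ^ n * (3 ^ (n + 1) / k) := by gcongr; exact add_two_mul_div_pow_le hk1 hn
    _ = 3 ^ (n + 1) * C / k * dist x y ^ n := by ring
    _ ≤ ε * dist x y ^ n := by gcongr

theorem addHaar_ball_mul_volume_image_le {S : Set E} {f : E → ℝ} {q : ℝ} (hq : 0 ≤ q)
    (hf : ∀ x ∈ S, IsBigOWith q (𝓝[S] x) (fun y => f y - f x) fun y => dist y x ^ finrank ℝ E) :
    μ (ball 0 1) * volume (f '' S) ≤ ENNReal.ofReal (2 * q) * μ S := by
  set n := finrank ℝ E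
  set R : E → Set ℝ := fun x => {r | 0 < r ∧ ∀ y ∈ S, dist y x ≤ r → |f y - f x| ≤ q * r ^ n}
  have hR : ∀ x ∈ S, ∀ δ > 0, (R x ∩ Ioo 0 δ).Nonempty := by
    intro x hx δ hδ
    obtain ⟨ε, hε, hball⟩ := Metric.mem_nhdsWithin_iff.1 (hf x hx).bound
    have hr : 0 < min (ε / 2) (δ / 2) := by positivity
    refine ⟨min (ε / 2) (δ / 2), ⟨hr, fun y hy hyx => ?_⟩, hr, by
      linarith [min_le_right (ε / 2) (δ / 2)]⟩
    have : ‖f y - f x‖ ≤ q * ‖dist y x ^ n‖ :=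
      hball ⟨hyx.trans_lt (by linarith [min_le_left (ε / 2) (δ / 2)]), hy⟩
    rw [Real.norm_eq_abs, Real.norm_of_nonneg (by positivity)] at this
    exact this.trans (by gcongr)
  refine ENNReal.le_of_forall_pos_le_add fun ε hε _ => ?_
  obtain ⟨t, r, htc, -, hr, hcov, hsum⟩ :=
    Besicovitch.exists_closedBall_covering_tsum_measure_le μ
      (ε := ε / ENNReal.ofReal (2 * q))
      (ENNReal.div_pos (by simpa using hε.ne') ENNReal.ofReal_ne_top).ne' R S hR
  have himage : f '' S ⊆ ⋃ x ∈ t, Icc (f x - q * r x ^ n) (f x + q * r x ^ n) := by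
    rintro - ⟨y, hy, rfl⟩
    obtain ⟨x, hxt, hyx⟩ := mem_iUnion₂.1 (hcov hy)
    have := abs_sub_le_iff.1 ((hr x hxt).2 y hy hyx)
    exact mem_iUnion₂.2 ⟨x, hxt, by constructor <;> linarith⟩
  calc μ (ball 0 1) * volume (f '' S)
      ≤ μ (ball 0 1) * ∑' x : t, volume (Icc (f x - q * r x ^ n) (f x + q * r x ^ n)) := by
        gcongr
        exact (measure_mono himage).trans (measure_biUnion_le _ htc _)
    _ = ∑' x : t, ENNReal.ofReal (2 * q) * μ (closedBall x (r x)) := by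
        rw [← ENNReal.tsum_mul_left]
        congr 1 with x
        rw [Real.volume_Icc, Measure.addHaar_closedBall μ _ (hr x x.2).1.le, ← mul_assoc,
          ← ENNReal.ofReal_mul (by positivity), mul_comm]
        congr 2
        ring
    _ = ENNReal.ofReal (2 * q) * ∑' x : t, μ (closedBall x (r x)) := ENNReal.tsum_mul_left
    _ ≤ ENNReal.ofReal (2 * q) * (μ S + ε / ENNReal.ofReal (2 * q)) := by gcongr
    _ ≤ ENNReal.ofReal (2 * q) * μ S + ε := by
        rw [mul_add]
        gcongr
        exact ENNReal.mul_div_le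

end Haar

variable [FiniteDimensional ℝ E]

theorem volume_image_eq_zero_of_isLittleO {S : Set E} {f : E → ℝ}
    (hf : ∀ x ∈ S, (fun y => f y - f x) =o[𝓝[S] x] fun y => dist y x ^ finrank ℝ E) :
    volume (f '' S) = 0 := by
  borelize E
  set μ : Measure E := Measure.addHaar
  rw [← inter_univ S, ← iUnion_closedBall_nat (0 : E), inter_iUnion, image_iUnion]
  refine measure_iUnion_null fun m => ?_
  set T := S ∩ closedBall (0 : E) m
  have hT : μ T ≠ ∞ := ((measure_mono inter_subset_right).trans_lt measure_closedBall_lt_top).ne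
  have hbound : ∀ ε > 0, μ (ball 0 1) * volume (f '' T) ≤ ENNReal.ofReal (2 * ε) * μ T :=
    fun ε hε => addHaar_ball_mul_volume_image_le μ hε.le fun x hx =>
      ((hf x hx.1).mono (nhdsWithin_mono x inter_subset_left)).forall_isBigOWith hε
  have hlim : Tendsto (fun ε => ENNReal.ofReal (2 * ε) * μ T) (𝓝[>] 0) (𝓝 0) := by
    have h : Tendsto (fun ε : ℝ => ENNReal.ofReal (2 * ε)) (𝓝 0) (𝓝 0) :=
      (ENNReal.continuous_ofReal.comp (continuous_const_mul 2)).tendsto' 0 0 (by simp)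
    simpa using (ENNReal.Tendsto.mul_const h (Or.inr hT)).mono_left nhdsWithin_le_nhds
  have h0 := ge_of_tendsto hlim (eventually_nhdsWithin_of_forall hbound)
  rw [nonpos_iff_eq_zero, mul_eq_zero] at h0
  exact h0.resolve_left (measure_ball_pos μ 0 one_pos).ne'

theorem volume_image_eq_zero_of_abs_sub_le_mul_dist_pow_finrank {S : Set E} {f : E → ℝ} {C : ℝ}
    (hE : 2 ≤ finrank ℝ E) (hf : ∀ x ∈ S, ∀ y ∈ S, |f x - f y| ≤ C * dist x y ^ finrank ℝ E) :
    volume (f '' S) = 0 := by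
  borelize E
  set μ : Measure E := Measure.addHaar
  set D := {x ∈ S | Tendsto (fun r => μ (S ∩ closedBall x r) / μ (closedBall x r)) (𝓝[>] 0) (𝓝 1)}
  have hf' : ∀ x ∈ S, ∀ y ∈ S, |f x - f y| ≤ |C| * dist x y ^ finrank ℝ E := fun x hx y hy =>
    (hf x hx y hy).trans (by gcongr; exact le_abs_self C)
  have hD : volume (f '' D) = 0 := volume_image_eq_zero_of_isLittleO fun x hx =>
    (isLittleO_sub_of_density_one μ hE (abs_nonneg C) hf' hx.1 hx.2).mono
      (nhdsWithin_mono x (sep_subset _ _))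
  have hSD : μ (S \ D) = 0 := by
    have hae := ae_iff.1 (Besicovitch.ae_tendsto_measure_inter_div μ S)
    refine measure_mono_null ?_
      (nonpos_iff_eq_zero.1 ((Measure.le_restrict_apply S _).trans hae.le))
    exact fun x hx => ⟨fun h => hx.2 ⟨hx.1, h⟩, hx.1⟩
  have hSD' : volume (f '' (S \ D)) = 0 := by
    have h := addHaar_ball_mul_volume_image_le μ (abs_nonneg C) (S := S \ D) (f := f)
      fun x hx => IsBigOWith.of_bound <| eventually_nhdsWithin_of_forall fun y hy => by
        rw [Real.norm_eq_abs, Real.norm_of_nonneg (by positivity)]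
        exact hf' y hy.1 x hx.1
    rw [hSD, mul_zero, nonpos_iff_eq_zero, mul_eq_zero] at h
    exact h.resolve_left (measure_ball_pos μ 0 one_pos).ne'
  rw [← union_sdiff_cancel (sep_subset S _ : D ⊆ S), image_union]
  exact measure_union_null hD hSD'

end

/-- Ferry's Lemma: if `f` satisfies `|f x - f y| ≤ C ‖x - y‖ ^ n` on a subset `E`
of `ℝⁿ`, `n ≥ 2`, then `f '' E` has Lebesgue measure zero in `ℝ`. -/
theorem ferry_lemma {n : ℕ} (hn : 2 ≤ n)
    (E : Set (EuclideanSpace ℝ (Fin n))) (f : EuclideanSpace ℝ (Fin n) → ℝ) (C : ℝ)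
    (hf : ∀ x ∈ E, ∀ y ∈ E, |f x - f y| ≤ C * ‖x - y‖ ^ n) :
    volume (f '' E) = 0 :=
  volume_image_eq_zero_of_abs_sub_le_mul_dist_pow_finrank (C := C)
    (by rwa [finrank_euclideanSpace_fin])
    (by simpa [finrank_euclideanSpace_fin, dist_eq_norm] using hf)
end

section
/- Let X be a compact connected subset of ℝ^d with d ≥ 2. For any x, y ∈ X and ε > 0, there exists a finite sequence x = x₀, x₁, …, x_k = y of points of X with Σ_{i=0}^{k-1} ‖x_{i+1} − x_i‖^d < ε. -/
/-!
Let `f z` be the infimal energy `∑ ‖x_{i+1} - x_i‖ ^ d` of chains in `X` from `x` to `z`.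
Appending one step shows `|f w - f z| ≤ ‖w - z‖ ^ d`, so `f` is continuous on `X` and, `X` being
connected, `f '' X ⊇ [0, f y]`; it suffices to show that `f '' X` is Lebesgue-null.
Near a density point `p` of `X`, every point of `closedBall p t` is within `θ t` of `X` for small
`t`, so each `z ∈ X ∩ closedBall p t` is joined to `p` by a chain of `O(1/θ)` steps of length
`O(θ t)`, of energy `O(θ t ^ d)` because `d ≥ 2`. Hence `f` oscillates by `o(t ^ d)` on small balls
around almost every point of `X` and by `O(t ^ d)` around every point, and a Besicovitch covering
of `X` turns this into `volume (f '' X) = 0`.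
-/

open Metric MeasureTheory Set Filter Topology Module
open scoped ENNReal

section ImageMeasure

variable {α β : Type*} [MetricSpace α] [MeasurableSpace α] [OpensMeasurableSpace α]
  [SecondCountableTopology α] [HasBesicovitchCovering α] [MeasurableSpace β]
  (μ : Measure α) [SFinite μ] [μ.OuterRegular] (ν : Measure β) {f : α → β}

theorem measure_image_le_of_eventually_measure_image_inter_closedBall_le {t : Set α}
    {η ε : ℝ≥0∞} (hε : ε ≠ 0)
    (h : ∀ p ∈ t, ∀ᶠ r in 𝓝[>] 0, ν (f '' (t ∩ closedBall p r)) ≤ η * μ (closedBall p r)) :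
    ν (f '' t) ≤ η * (μ t + ε) := by
  obtain ⟨c, r, hc, -, hr, hcov, hsum⟩ :=
    Besicovitch.exists_closedBall_covering_tsum_measure_le μ hε
      (fun p => {r | ν (f '' (t ∩ closedBall p r)) ≤ η * μ (closedBall p r)}) t
      fun p hp δ hδ => ((h p hp).and (Ioo_mem_nhdsGT hδ)).exists
  have hcover : f '' t ⊆ ⋃ p ∈ c, f '' (t ∩ closedBall p (r p)) := by
    rintro _ ⟨q, hq, rfl⟩
    obtain ⟨p, hp, hqp⟩ := mem_iUnion₂.1 (hcov hq)
    exact mem_iUnion₂.2 ⟨p, hp, q, ⟨hq, hqp⟩, rfl⟩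
  calc ν (f '' t) ≤ ∑' p : c, ν (f '' (t ∩ closedBall p (r p))) :=
        (measure_mono hcover).trans (measure_biUnion_le ν hc _)
    _ ≤ ∑' p : c, η * μ (closedBall p (r p)) := ENNReal.tsum_le_tsum fun p => hr p p.2
    _ ≤ η * (μ t + ε) := by rw [ENNReal.tsum_mul_left]; gcongr

theorem measure_image_eq_zero_of_ae_eventually_le {s : Set α} (hs : μ s ≠ ∞) {C : ℝ≥0∞}
    (hC : C ≠ ∞)
    (hbound : ∀ p ∈ s, ∀ᶠ r in 𝓝[>] 0, ν (f '' (s ∩ closedBall p r)) ≤ C * μ (closedBall p r))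
    (hsmall : ∀ η : ℝ≥0∞, 0 < η → ∀ᵐ p ∂μ.restrict s,
      ∀ᶠ r in 𝓝[>] 0, ν (f '' (s ∩ closedBall p r)) ≤ η * μ (closedBall p r)) :
    ν (f '' s) = 0 := by
  have hle : ∀ η : ℝ≥0∞, 0 < η → ν (f '' s) ≤ η * (μ s + η) + C * η := by
    intro η hη
    set G := {p ∈ s | ∀ᶠ r in 𝓝[>] 0, ν (f '' (s ∩ closedBall p r)) ≤ η * μ (closedBall p r)}
    have hGs : G ⊆ s := sep_subset _ _
    have hnull : μ (s \ G) = 0 := by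
      refine measure_mono_null (t := {p | ¬ _} ∩ s)
        (fun p hp => ⟨fun hP => hp.2 ⟨hp.1, hP⟩, hp.1⟩)
        (nonpos_iff_eq_zero.1 ((Measure.le_restrict_apply _ _).trans_eq (ae_iff.1 (hsmall η hη))))
    have hG := measure_image_le_of_eventually_measure_image_inter_closedBall_le μ ν hη.ne'
      (t := G) fun p hp => hp.2.mono fun r hr =>
        (measure_mono (image_mono (inter_subset_inter_left _ hGs))).trans hr
    have hZ := measure_image_le_of_eventually_measure_image_inter_closedBall_le μ ν hη.ne'
      (t := s \ G) fun p hp => (hbound p hp.1).mono fun r hr =>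
        (measure_mono (image_mono (inter_subset_inter_left _ sdiff_subset))).trans hr
    calc ν (f '' s) = ν (f '' G ∪ f '' (s \ G)) := by rw [← image_union, union_sdiff_cancel hGs]
      _ ≤ ν (f '' G) + ν (f '' (s \ G)) := measure_union_le _ _
      _ ≤ η * (μ s + η) + C * η := by
        rw [hnull, zero_add] at hZ
        gcongr
        exact hG.trans (by gcongr)
  have hK : μ s + 1 + C ≠ ∞ := by simp [hs, hC]
  have hlim : Tendsto (fun η => η * (μ s + 1 + C)) (𝓝[>] 0) (𝓝 0) := by
    simpa using ((ENNReal.continuous_mul_const hK).tendsto 0).mono_left nhdsWithin_le_nhds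
  refine nonpos_iff_eq_zero.1 (ge_of_tendsto hlim ?_)
  filter_upwards [self_mem_nhdsWithin, Ioo_mem_nhdsGT one_pos] with η hη hη1
  calc ν (f '' s) ≤ η * (μ s + η) + C * η := hle η hη
    _ ≤ η * (μ s + 1 + C) := by
      rw [mul_add η (μ s + 1), mul_comm C]
      gcongr
      exact hη1.2.le

end ImageMeasure

theorem ae_eventually_forall_closedBall_exists_dist_le {α : Type*} [PseudoMetricSpace α]
    [MeasurableSpace α] [SecondCountableTopology α] [BorelSpace α] (μ : Measure α)
    [IsUnifLocDoublingMeasure μ] [IsLocallyFiniteMeasure μ] (S : Set α) {θ : ℝ} (hθ : 0 < θ) :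
    ∀ᵐ p ∂μ.restrict S, ∀ᶠ t in 𝓝[>] 0, ∀ w ∈ closedBall p t, ∃ u ∈ S, dist u w ≤ θ * t := by
  filter_upwards [IsUnifLocDoublingMeasure.ae_tendsto_measure_inter_div μ S θ⁻¹] with p hp
  -- density of `S` in the moving balls `closedBall w (θ * t)`, `w ∈ closedBall p t`, `t → 0⁺`;
  -- inflated by `θ⁻¹` they contain `p`
  let l : Filter (ℝ × α) := comap Prod.fst (𝓝[>] 0) ⊓ 𝓟 {q | dist q.2 p ≤ q.1}
  have hδ : Tendsto (fun q : ℝ × α => θ * q.1) l (𝓝[>] 0) := by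
    refine (Tendsto.comp ?_ tendsto_comap).mono_left inf_le_left
    refine tendsto_nhdsWithin_iff.2 ⟨?_, eventually_nhdsWithin_of_forall fun t ht => mul_pos hθ ht⟩
    simpa using (tendsto_id.const_mul θ).mono_left (nhdsWithin_le_nhds (a := (0 : ℝ)))
  have hmem : ∀ᶠ q in l, p ∈ closedBall q.2 (θ⁻¹ * (θ * q.1)) :=
    mem_inf_of_right <| mem_principal.2 fun q hq => by
      rwa [mem_ofPred_eq, inv_mul_cancel_left₀ hθ.ne', mem_closedBall, dist_comm]
  have hpos := (hp (fun q => q.2) _ hδ hmem).eventually (lt_mem_nhds zero_lt_one)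
  rw [eventually_inf_principal, eventually_comap] at hpos
  filter_upwards [hpos] with t ht w hw
  obtain ⟨u, hu⟩ := nonempty_of_measure_ne_zero
    (ENNReal.div_pos_iff.1 (ht (t, w) rfl hw)).1
  exact ⟨u, hu.1, hu.2⟩

theorem Real.volume_image_le_of_forall_abs_sub_le {α : Type*} {f : α → ℝ} {t : Set α} {a g : ℝ}
    (h : ∀ q ∈ t, |f q - a| ≤ g) : volume (f '' t) ≤ ENNReal.ofReal (2 * g) :=
  calc volume (f '' t) ≤ volume (closedBall a g) :=
        measure_mono (image_subset_iff.2 fun q hq => mem_closedBall.2 (h q hq))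
    _ = ENNReal.ofReal (2 * g) := Real.volume_closedBall a g

theorem exists_chain_of_forall_segment_exists_dist_le {E : Type*} [NormedAddCommGroup E]
    [NormedSpace ℝ E] {X : Set E} {p z : E} {δ : ℝ} (hp : p ∈ X) (hz : z ∈ X) (hδ : 0 < δ)
    (hnear : ∀ w ∈ segment ℝ p z, ∃ u ∈ X, dist u w ≤ δ) :
    ∃ (n : ℕ) (u : ℕ → E), (n : ℝ) * δ ≤ dist p z + 2 * δ ∧ u 0 = p ∧ u n = z ∧
      (∀ j ≤ n, u j ∈ X) ∧ ∀ j < n, dist (u (j + 1)) (u j) ≤ 3 * δ := by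
  set n := ⌈dist p z / δ⌉₊ + 1
  have hn : (0 : ℝ) < n := by positivity
  have hceil := Nat.ceil_lt_add_one (div_nonneg (dist_nonneg (x := p) (y := z)) hδ.le)
  have hnδ : dist p z ≤ n * δ := by
    rw [← div_le_iff₀ hδ]
    exact (Nat.le_ceil _).trans (by simp [n])
  -- the points `w j` cut the segment into `n` pieces of length at most `δ`
  set w : ℕ → E := fun j => AffineMap.lineMap p z ((j : ℝ) / n)
  have hw : ∀ j ≤ n, w j ∈ segment ℝ p z := fun j hj =>
    lineMap_mem_segment (𝕜 := ℝ) p z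
      ⟨by positivity, div_le_one_of_le₀ (by exact_mod_cast hj) hn.le⟩
  choose! v hvX hv using fun j hj => hnear (w j) (hw j hj)
  set u : ℕ → E := fun j => if j = 0 then p else if j = n then z else v j
  have hu : ∀ j ≤ n, u j ∈ X ∧ dist (u j) (w j) ≤ δ := by
    intro j hj
    by_cases h0 : j = 0
    · simp [u, w, h0, hp, hδ.le]
    by_cases hjn : j = n
    · simp [u, w, hjn, hz, hδ.le]
    simpa [u, h0, hjn] using ⟨hvX j hj, hv j hj⟩
  refine ⟨n, u, ?_, by simp [u], by simp [u], fun j hj => (hu j hj).1, fun j hj => ?_⟩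
  · have : (n : ℝ) ≤ dist p z / δ + 2 := by push_cast [n]; linarith
    calc (n : ℝ) * δ ≤ (dist p z / δ + 2) * δ := by gcongr
      _ = dist p z + 2 * δ := by rw [add_mul, div_mul_cancel₀ _ hδ.ne']
  calc _ ≤ dist _ (w (j + 1)) + dist (w (j + 1)) (w j) + dist (w j) _ := dist_triangle4 _ _ _ _
    _ ≤ δ + δ + δ := by
      gcongr
      · exact (hu _ hj).2
      · rw [dist_lineMap_lineMap, Real.dist_eq, ← sub_div, Nat.cast_succ, add_sub_cancel_left,
          abs_of_pos (by positivity), one_div_mul_eq_div, div_le_iff₀ hn, mul_comm]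
        exact hnδ
      · rw [dist_comm]; exact (hu _ hj.le).2
    _ = 3 * δ := by ring

section ChainEnergy

variable {E : Type*} [SeminormedAddCommGroup E]

def chainEnergies (d : ℕ) (X : Set E) (x z : E) : Set ℝ :=
  {s | ∃ (k : ℕ) (c : ℕ → E), c 0 = x ∧ c k = z ∧ (∀ i ≤ k, c i ∈ X) ∧
    ∑ i ∈ Finset.range k, ‖c (i + 1) - c i‖ ^ d = s}

-- The set is nonempty for `x, z ∈ X`; otherwise this is the junk value `sInf ∅ = 0`.
noncomputable def minChainEnergy (d : ℕ) (X : Set E) (x z : E) : ℝ :=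
  sInf (chainEnergies d X x z)

variable {d : ℕ} {X : Set E} {x z w : E} {s : ℝ}

lemma nonneg_of_mem_chainEnergies (hs : s ∈ chainEnergies d X x z) : 0 ≤ s := by
  obtain ⟨k, c, -, -, -, rfl⟩ := hs
  positivity

lemma bddBelow_chainEnergies : BddBelow (chainEnergies d X x z) :=
  ⟨0, fun _ => nonneg_of_mem_chainEnergies⟩

lemma zero_mem_chainEnergies (hx : x ∈ X) : 0 ∈ chainEnergies d X x x :=
  ⟨0, fun _ => x, rfl, rfl, fun _ _ => hx, by simp⟩

lemma add_mem_chainEnergies (hs : s ∈ chainEnergies d X x z) (hw : w ∈ X) :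
    s + ‖w - z‖ ^ d ∈ chainEnergies d X x w := by
  obtain ⟨k, c, h0, hk, hX, rfl⟩ := hs
  refine ⟨k + 1, Function.update c (k + 1) w, by simpa using h0, by simp, fun i hi => ?_, ?_⟩
  · rcases (Nat.le_succ_iff.1 hi) with hik | rfl
    · simpa [Function.update_of_ne (by omega : i ≠ k + 1)] using hX i hik
    · simpa using hw
  · rw [Finset.sum_range_succ, Function.update_self, Function.update_of_ne (by omega), hk]
    congr 1
    refine Finset.sum_congr rfl fun i hi => ?_
    have hi := Finset.mem_range.1 hi
    rw [Function.update_of_ne (by omega), Function.update_of_ne (by omega)]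

lemma chainEnergies_nonempty (hx : x ∈ X) (hz : z ∈ X) : (chainEnergies d X x z).Nonempty :=
  ⟨_, add_mem_chainEnergies (zero_mem_chainEnergies hx) hz⟩

lemma minChainEnergy_nonneg : 0 ≤ minChainEnergy d X x z :=
  Real.sInf_nonneg fun _ => nonneg_of_mem_chainEnergies

lemma minChainEnergy_self (hx : x ∈ X) : minChainEnergy d X x x = 0 :=
  le_antisymm (csInf_le bddBelow_chainEnergies (zero_mem_chainEnergies hx)) minChainEnergy_nonneg

lemma minChainEnergy_le_add (hx : x ∈ X) (hz : z ∈ X) (hw : w ∈ X) :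
    minChainEnergy d X x w ≤ minChainEnergy d X x z + ‖w - z‖ ^ d :=
  sub_le_iff_le_add.1 <| le_csInf (chainEnergies_nonempty hx hz) fun _ hs =>
    sub_le_iff_le_add.2 (csInf_le bddBelow_chainEnergies (add_mem_chainEnergies hs hw))

lemma abs_minChainEnergy_sub_le (hx : x ∈ X) (hz : z ∈ X) (hw : w ∈ X) :
    |minChainEnergy d X x w - minChainEnergy d X x z| ≤ ‖w - z‖ ^ d := by
  have := minChainEnergy_le_add (d := d) hx hw hz
  rw [norm_sub_rev] at this
  exact abs_sub_le_iff.2 ⟨by linarith [minChainEnergy_le_add (d := d) hx hz hw], by linarith⟩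

lemma continuousOn_minChainEnergy (hd : d ≠ 0) (hx : x ∈ X) :
    ContinuousOn (minChainEnergy d X x) X := by
  intro z hz
  rw [ContinuousWithinAt, tendsto_iff_norm_sub_tendsto_zero]
  refine squeeze_zero' (Eventually.of_forall fun _ => norm_nonneg _)
    (eventually_nhdsWithin_of_forall fun w hw => abs_minChainEnergy_sub_le hx hz hw) ?_
  have : Continuous fun w => ‖w - z‖ ^ d := by fun_prop
  simpa [hd] using (this.tendsto z).mono_left nhdsWithin_le_nhds

lemma abs_minChainEnergy_sub_le_sum (hx : x ∈ X) {u : ℕ → E} {n : ℕ} (hu : ∀ j ≤ n, u j ∈ X) :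
    |minChainEnergy d X x (u n) - minChainEnergy d X x (u 0)| ≤
      ∑ j ∈ Finset.range n, ‖u (j + 1) - u j‖ ^ d := by
  rw [← Finset.sum_range_sub (fun j => minChainEnergy d X x (u j))]
  refine (Finset.abs_sum_le_sum_abs _ _).trans (Finset.sum_le_sum fun j hj => ?_)
  have hj := Finset.mem_range.1 hj
  exact abs_minChainEnergy_sub_le hx (hu j hj.le) (hu (j + 1) hj)

end ChainEnergy

section FiniteDimensional

variable {E : Type*} [NormedAddCommGroup E] [NormedSpace ℝ E] {d : ℕ} {X : Set E} {x : E}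

theorem abs_minChainEnergy_sub_le_of_forall_closedBall_exists_dist_le {p z : E} {t θ : ℝ}
    (hd : 2 ≤ d) (hx : x ∈ X) (hp : p ∈ X) (hz : z ∈ X) (hzp : z ∈ closedBall p t) (ht : 0 < t)
    (hθ : 0 < θ) (hθ1 : θ ≤ 1) (hnear : ∀ w ∈ closedBall p t, ∃ u ∈ X, dist u w ≤ θ * t) :
    |minChainEnergy d X x z - minChainEnergy d X x p| ≤ 3 ^ (d + 1) * θ * t ^ d := by
  obtain ⟨n, u, hn, hu0, hun, huX, hstep⟩ :=
    exists_chain_of_forall_segment_exists_dist_le hp hz (mul_pos hθ ht) fun w hw =>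
      hnear w ((convex_closedBall p t).segment_subset (mem_closedBall_self ht.le) hzp hw)
  have hnθ : n * θ ≤ 3 := by
    rw [dist_comm] at hn
    have : (n * θ) * t ≤ 3 * t := by nlinarith [mem_closedBall.1 hzp]
    exact le_of_mul_le_mul_right this ht
  have hθd : θ ^ d ≤ θ ^ 2 := pow_le_pow_of_le_one hθ.le hθ1 hd
  calc |minChainEnergy d X x z - minChainEnergy d X x p|
      ≤ ∑ j ∈ Finset.range n, ‖u (j + 1) - u j‖ ^ d := by
        simpa [hu0, hun] using abs_minChainEnergy_sub_le_sum hx huX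
    _ ≤ ∑ j ∈ Finset.range n, (3 * (θ * t)) ^ d := Finset.sum_le_sum fun j hj =>
        pow_le_pow_left₀ (norm_nonneg _) (dist_eq_norm (u (j + 1)) (u j) ▸ hstep j
          (Finset.mem_range.1 hj)) d
    _ = 3 ^ d * t ^ d * (n * θ ^ d) := by simp [mul_pow]; ring
    _ ≤ 3 ^ d * t ^ d * (3 * θ) := by
        refine mul_le_mul_of_nonneg_left ?_ (by positivity)
        calc n * θ ^ d ≤ n * θ ^ 2 := by gcongr
          _ = (n * θ) * θ := by ring
          _ ≤ 3 * θ := by gcongr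
    _ = 3 ^ (d + 1) * θ * t ^ d := by ring

variable [FiniteDimensional ℝ E] [MeasurableSpace E] [BorelSpace E]

theorem volume_image_minChainEnergy_eq_zero (hdim : finrank ℝ E = d) (hd : 2 ≤ d)
    (hXc : IsCompact X) (hx : x ∈ X) : volume (minChainEnergy d X x '' X) = 0 := by
  set μ : Measure E := Measure.addHaar
  set B := μ (ball 0 1)
  have hB0 : B ≠ 0 := (measure_ball_pos μ 0 one_pos).ne'
  have hball : ∀ p {r a : ℝ}, 0 ≤ r → 0 ≤ a →
      ENNReal.ofReal (a * r ^ d) = ENNReal.ofReal a / B * μ (closedBall p r) := by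
    intro p r a hr ha
    rw [Measure.addHaar_closedBall μ p hr, hdim, mul_comm (ENNReal.ofReal _), ← mul_assoc,
      ENNReal.div_mul_cancel hB0 measure_ball_lt_top.ne, ENNReal.ofReal_mul ha]
  refine measure_image_eq_zero_of_ae_eventually_le μ volume hXc.measure_lt_top.ne
    (C := ENNReal.ofReal 2 / B) (ENNReal.div_ne_top ENNReal.ofReal_ne_top hB0) ?_ ?_
  · intro p hp
    filter_upwards [self_mem_nhdsWithin] with r (hr : 0 < r)
    calc _ ≤ ENNReal.ofReal (2 * r ^ d) := Real.volume_image_le_of_forall_abs_sub_le fun q hq =>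
          (abs_minChainEnergy_sub_le hx hp hq.1).trans <| pow_le_pow_left₀ (norm_nonneg _)
            (dist_eq_norm q p ▸ hq.2) d
      _ = _ := hball p hr.le zero_le_two
  · intro η hη
    obtain ⟨θ, hθη, hθ, hθ1⟩ : ∃ θ : ℝ,
        ENNReal.ofReal (2 * 3 ^ (d + 1) * θ) / B < η ∧ 0 < θ ∧ θ ≤ 1 := by
      have : Tendsto (fun θ : ℝ => ENNReal.ofReal (2 * 3 ^ (d + 1) * θ) / B) (𝓝[>] 0) (𝓝 0) := by
        have hc : Continuous fun θ : ℝ => ENNReal.ofReal (2 * 3 ^ (d + 1) * θ) :=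
          ENNReal.continuous_ofReal.comp (by fun_prop)
        simpa using (ENNReal.Tendsto.div_const (hc.tendsto 0) (Or.inr hB0)).mono_left
          nhdsWithin_le_nhds
      exact ((this.eventually (gt_mem_nhds hη)).and (Ioc_mem_nhdsGT one_pos)).exists
    filter_upwards [ae_eventually_forall_closedBall_exists_dist_le μ X hθ,
      ae_restrict_mem hXc.measurableSet] with p hp hpX
    filter_upwards [hp, self_mem_nhdsWithin] with r hnear (hr : 0 < r)
    calc _ ≤ ENNReal.ofReal (2 * (3 ^ (d + 1) * θ * r ^ d)) :=
          Real.volume_image_le_of_forall_abs_sub_le fun q hq =>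
            abs_minChainEnergy_sub_le_of_forall_closedBall_exists_dist_le hd hx hpX hq.1 hq.2 hr
              hθ hθ1 hnear
      _ = ENNReal.ofReal (2 * 3 ^ (d + 1) * θ) / B * μ (closedBall p r) := by
          rw [← hball p hr.le (by positivity)]; ring_nf
      _ ≤ η * μ (closedBall p r) := by gcongr

theorem minChainEnergy_eq_zero (hdim : finrank ℝ E = d) (hd : 2 ≤ d) (hXc : IsCompact X)
    (hXconn : IsPreconnected X) {y : E} (hx : x ∈ X) (hy : y ∈ X) :
    minChainEnergy d X x y = 0 := by
  have hIcc : Icc 0 (minChainEnergy d X x y) ⊆ minChainEnergy d X x '' X := by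
    simpa [minChainEnergy_self hx] using
      hXconn.intermediate_value hx hy (continuousOn_minChainEnergy (by omega) hx)
  have := (measure_mono hIcc).trans_eq (volume_image_minChainEnergy_eq_zero hdim hd hXc hx)
  rw [Real.volume_Icc, sub_zero, nonpos_iff_eq_zero, ENNReal.ofReal_eq_zero] at this
  exact le_antisymm this minChainEnergy_nonneg

end FiniteDimensional

/-- Mather's chain lemma: in a compact connected subset `X` of `ℝ^d`, `d ≥ 2`,
any two points can be joined by a chain in `X` with `∑ ‖x_{i+1} - x_i‖^d < ε`. -/
theorem mather_chain_lemma {d : ℕ} (hd : 2 ≤ d)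
    (X : Set (EuclideanSpace ℝ (Fin d))) (hXc : IsCompact X) (hXconn : IsConnected X)
    (x y : EuclideanSpace ℝ (Fin d)) (hx : x ∈ X) (hy : y ∈ X) (ε : ℝ) (hε : 0 < ε) :
    ∃ (k : ℕ) (c : ℕ → EuclideanSpace ℝ (Fin d)),
      c 0 = x ∧ c k = y ∧ (∀ i ≤ k, c i ∈ X) ∧
      ∑ i ∈ Finset.range k, ‖c (i + 1) - c i‖ ^ d < ε := by
  have hzero : minChainEnergy d X x y = 0 :=
    minChainEnergy_eq_zero finrank_euclideanSpace_fin hd hXc hXconn.isPreconnected hx hy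
  obtain ⟨_, ⟨k, c, h0, hk, hc, rfl⟩, hlt⟩ :=
    exists_lt_of_csInf_lt (chainEnergies_nonempty hx hy) (hzero.trans_lt hε)
  exact ⟨k, c, h0, hk, hc, hlt⟩
end

section
/- Let (φ_t)_{t∈ℝ} be a continuous flow on a metric space X. Let Per(φ) be the set of periodic non-fixed points, and define T : Per(φ) → (0, ∞) by letting T(x) be the smallest positive period of x. Then Per(φ) can be written as a countable union of closed subsets of X on each of which T is continuous. -/
open Set Filter Topology

set_option linter.unusedSectionVars false

section aux
variable {X : Type*} [MetricSpace X] (φ : ℝ → X → X)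

private lemma flow_neg {x : X} (h0 : ∀ x, φ 0 x = x)
    (hadd : ∀ s t x, φ (s + t) x = φ s (φ t x)) {t : ℝ} (h : φ t x = x) :
    φ (-t) x = x := by
  have h1 := hadd (-t) t x
  rw [h, neg_add_cancel, h0] at h1
  exact h1.symm

private lemma flow_nat {x : X} (h0 : ∀ x, φ 0 x = x)
    (hadd : ∀ s t x, φ (s + t) x = φ s (φ t x)) {T : ℝ} (h : φ T x = x) :
    ∀ n : ℕ, φ (n * T) x = x := by
  intro n
  induction n with
  | zero => simpa using h0 x
  | succ n ih =>
      have h1 : ((n + 1 : ℕ) : ℝ) * T = T + n * T := by push_cast; ring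
      rw [h1, hadd, ih, h]

/-- The minimal period of a periodic non-fixed point. -/
private lemma minper (hcont : Continuous fun p : ℝ × X => φ p.1 p.2)
    (h0 : ∀ x, φ 0 x = x) (hadd : ∀ s t x, φ (s + t) x = φ s (φ t x))
    {x : X} (hper : ∃ t > 0, φ t x = x) (hnf : ¬ ∀ t, φ t x = x) :
    ∃ T : ℝ, 0 < T ∧ φ T x = x ∧ (∀ t, 0 < t → φ t x = x → T ≤ t) ∧
      (∀ t, 0 < t → φ t x = x → ∃ m : ℕ, 1 ≤ m ∧ t = m * T) ∧
      sInf {t : ℝ | 0 < t ∧ φ t x = x} = T := by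
  obtain ⟨t₀, ht₀, hft₀⟩ := hper
  set S : AddSubgroup ℝ :=
    { carrier := {t | φ t x = x}
      zero_mem' := h0 x
      add_mem' := fun {a b} ha hb => by
        simp only [Set.mem_setOf_eq] at *
        rw [hadd, hb, ha]
      neg_mem' := fun {a} ha => flow_neg φ h0 hadd ha } with hS
  have hclosed : IsClosed (S : Set ℝ) := by
    have : Continuous fun t : ℝ => φ t x :=
      hcont.comp (continuous_id.prodMk continuous_const)
    exact isClosed_eq this continuous_const
  rcases AddSubgroup.dense_or_cyclic S with hd | ⟨a, ha⟩
  · exfalso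
    apply hnf
    intro t
    have : (S : Set ℝ) = Set.univ := by
      rw [← hclosed.closure_eq, hd.closure_eq]
    have ht : t ∈ (S : Set ℝ) := this ▸ Set.mem_univ t
    exact ht
  · have hmem : ∀ t : ℝ, φ t x = x ↔ ∃ m : ℤ, m • a = t := by
      intro t
      constructor
      · intro h
        have : t ∈ S := h
        rw [ha] at this
        exact AddSubgroup.mem_closure_singleton.1 this
      · rintro ⟨m, rfl⟩
        have : (m • a : ℝ) ∈ S := by
          rw [ha]; exact AddSubgroup.mem_closure_singleton.2 ⟨m, rfl⟩
        exact this
    have hane : a ≠ 0 := by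
      rintro rfl
      obtain ⟨m, hm⟩ := (hmem t₀).1 hft₀
      simp at hm
      exact ht₀.ne' hm.symm
    set T : ℝ := |a| with hT
    have hTpos : 0 < T := abs_pos.2 hane
    have hTper : φ T x = x := by
      rcases abs_choice a with h | h
      · rw [hT, h]; exact (hmem a).2 ⟨1, one_smul _ _⟩
      · rw [hT, h]; exact (hmem (-a)).2 ⟨-1, by simp⟩
    have hrep : ∀ t, 0 < t → φ t x = x → ∃ m : ℕ, 1 ≤ m ∧ t = m * T := by
      intro t ht hf
      obtain ⟨m, hm⟩ := (hmem t).1 hf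
      have hma : (m : ℝ) * a = t := by rw [← hm]; simp [zsmul_eq_mul]
      have htabs : t = |(m : ℝ)| * T := by
        rw [hT, ← abs_mul, hma, abs_of_pos ht]
      have hmne : m ≠ 0 := by
        rintro rfl; simp at hma; exact ht.ne' hma.symm
      refine ⟨m.natAbs, Nat.one_le_iff_ne_zero.2 (Int.natAbs_ne_zero.2 hmne), ?_⟩
      rw [htabs]
      congr 1
      simp [Nat.cast_natAbs]
    have hmin : ∀ t, 0 < t → φ t x = x → T ≤ t := by
      intro t ht hf
      obtain ⟨m, hm1, rfl⟩ := hrep t ht hf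
      calc T = 1 * T := (one_mul T).symm
        _ ≤ m * T := by
            apply mul_le_mul_of_nonneg_right _ hTpos.le
            exact_mod_cast hm1
    refine ⟨T, hTpos, hTper, hmin, hrep, ?_⟩
    apply le_antisymm
    · exact csInf_le ⟨T, fun t ⟨h1, h2⟩ => hmin t h1 h2⟩ ⟨hTpos, hTper⟩
    · exact le_csInf ⟨T, hTpos, hTper⟩ fun t ⟨h1, h2⟩ => hmin t h1 h2

private lemma closed1 (hcont : Continuous fun p : ℝ × X => φ p.1 p.2) (q r : ℝ) :
    IsClosed {x : X | ∃ t ∈ Set.Icc q r, φ t x = x} := by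
  apply IsSeqClosed.isClosed
  intro u x hu hux
  choose t ht hft using hu
  obtain ⟨τ, hτ, ψ, hψ, hψt⟩ := (isCompact_Icc).tendsto_subseq ht
  refine ⟨τ, hτ, ?_⟩
  have h2 : Tendsto (fun n => u (ψ n)) atTop (𝓝 x) := hux.comp hψ.tendsto_atTop
  have h1 : Tendsto (fun n => φ (t (ψ n)) (u (ψ n))) atTop (𝓝 (φ τ x)) :=
    (hcont.tendsto (τ, x)).comp (hψt.prodMk_nhds h2)
  have h3 : Tendsto (fun n => u (ψ n)) atTop (𝓝 (φ τ x)) := by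
    simpa only [hft] using h1
  exact tendsto_nhds_unique h3 h2

private lemma closed2 (hcont : Continuous fun p : ℝ × X => φ p.1 p.2) (c d e : ℝ) :
    IsClosed {x : X | ∀ s ∈ Set.Icc c d, e ≤ dist (φ s x) x} := by
  have : {x : X | ∀ s ∈ Set.Icc c d, e ≤ dist (φ s x) x} =
      ⋂ s ∈ Set.Icc c d, {x : X | e ≤ dist (φ s x) x} := by
    ext x; simp
  rw [this]
  refine isClosed_biInter fun s _ => ?_
  exact isClosed_le continuous_const
    ((hcont.comp (continuous_const.prodMk continuous_id)).dist continuous_id)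

private lemma Dstruct (hcont : Continuous fun p : ℝ × X => φ p.1 p.2)
    (h0 : ∀ x, φ 0 x = x) (hadd : ∀ s t x, φ (s + t) x = φ s (φ t x))
    {q r c e : ℝ} (hq : 0 < q) (hc : 0 < c) (he : 0 < e) (h2c : 2 * c ≤ r / 2)
    {x : X} (hx1 : ∃ t ∈ Set.Icc q r, φ t x = x)
    (hx2 : ∀ s ∈ Set.Icc c (r / 2), e ≤ dist (φ s x) x) :
    ∃ T, 0 < T ∧ φ T x = x ∧ T ∈ Set.Icc q r ∧
      (∀ t ∈ Set.Icc q r, φ t x = x → t = T) ∧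
      sInf {t : ℝ | 0 < t ∧ φ t x = x} = T ∧
      (∃ t > (0 : ℝ), φ t x = x) ∧ ¬ (∀ t, φ t x = x) := by
  obtain ⟨t₀, ht₀I, hft₀⟩ := hx1
  have hcr : c ≤ r / 2 := by linarith
  have hper : ∃ t > (0 : ℝ), φ t x = x := ⟨t₀, lt_of_lt_of_le hq ht₀I.1, hft₀⟩
  have hnf : ¬ ∀ t, φ t x = x := by
    intro h
    have h1 := hx2 c ⟨le_rfl, hcr⟩
    rw [h c, dist_self] at h1
    linarith
  obtain ⟨T, hTpos, hTper, hTmin, hTrep, hTinf⟩ := minper φ hcont h0 hadd hper hnf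
  have hTbig : r / 2 < T := by
    by_contra hle
    push_neg at hle
    rcases le_or_gt c T with hcT | hTc
    · have h1 := hx2 T ⟨hcT, hle⟩
      rw [hTper, dist_self] at h1
      linarith
    · set m := ⌈c / T⌉₊ with hm
      have hm1 : c ≤ (m : ℝ) * T := by
        have := Nat.le_ceil (c / T)
        calc c = c / T * T := by field_simp
          _ ≤ (m : ℝ) * T := by nlinarith
      have hm2 : (m : ℝ) * T < c + T := by
        have h1 : (m : ℝ) < c / T + 1 := Nat.ceil_lt_add_one (by positivity)
        have h2 : (c / T + 1) * T = c + T := by field_simp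
        nlinarith
      have hmemI : (m : ℝ) * T ∈ Set.Icc c (r / 2) := ⟨hm1, by nlinarith⟩
      have h1 := hx2 _ hmemI
      rw [flow_nat φ h0 hadd hTper m, dist_self] at h1
      linarith
  have huniq : ∀ t ∈ Set.Icc q r, φ t x = x → t = T := by
    rintro t htI hft
    obtain ⟨m, hm1, rfl⟩ := hTrep t (lt_of_lt_of_le hq htI.1) hft
    rcases (by omega : m = 1 ∨ 2 ≤ m) with rfl | hm2
    · simp
    · exfalso
      have h1 : (2 : ℝ) * T ≤ m * T := by
        apply mul_le_mul_of_nonneg_right _ hTpos.le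
        exact_mod_cast hm2
      have h2 : (m : ℝ) * T ≤ r := htI.2
      linarith
  exact ⟨T, hTpos, hTper, (huniq t₀ ht₀I hft₀) ▸ ht₀I, huniq, hTinf, hper, hnf⟩

private lemma Dcont (hcont : Continuous fun p : ℝ × X => φ p.1 p.2)
    (h0 : ∀ x, φ 0 x = x) (hadd : ∀ s t x, φ (s + t) x = φ s (φ t x))
    {q r c e : ℝ} (hq : 0 < q) (hc : 0 < c) (he : 0 < e) (h2c : 2 * c ≤ r / 2) :
    ContinuousOn (fun x => sInf {t : ℝ | 0 < t ∧ φ t x = x})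
      {x : X | (∃ t ∈ Set.Icc q r, φ t x = x) ∧
        ∀ s ∈ Set.Icc c (r / 2), e ≤ dist (φ s x) x} := by
  set D := {x : X | (∃ t ∈ Set.Icc q r, φ t x = x) ∧
      ∀ s ∈ Set.Icc c (r / 2), e ≤ dist (φ s x) x} with hD
  intro x hx
  obtain ⟨T, hTpos, hTper, hTI, huniq, hTinf, _, _⟩ :=
    Dstruct φ hcont h0 hadd hq hc he h2c hx.1 hx.2
  unfold ContinuousWithinAt
  rw [show (fun x => sInf {t : ℝ | 0 < t ∧ φ t x = x}) x = T from hTinf,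
    Metric.tendsto_nhds]
  intro ε hε
  set K := Set.Icc q r ∩ (Set.Ioo (T - ε) (T + ε))ᶜ with hK
  have hKc : IsCompact K := isCompact_Icc.inter_right isOpen_Ioo.isClosed_compl
  have hKpos : ∀ s ∈ K, 0 < dist (φ s x) x := by
    rintro s ⟨hsI, hsO⟩
    refine dist_pos.2 fun h => hsO ?_
    rw [huniq s hsI h]
    exact ⟨by linarith, by linarith⟩
  have hg : Continuous fun z : X × ℝ => dist (φ z.2 z.1) z.1 :=
    (hcont.comp (continuous_snd.prodMk continuous_fst)).dist continuous_fst
  have hev : ∀ᶠ y in 𝓝 x, ∀ s ∈ K, 0 < dist (φ s y) y := by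
    apply hKc.eventually_forall_of_forall_eventually
    intro s hs
    exact (hg.tendsto (x, s)) (Ioi_mem_nhds (hKpos s hs))
  filter_upwards [mem_nhdsWithin_of_mem_nhds hev, self_mem_nhdsWithin] with y hy hyD
  obtain ⟨Ty, hTypos, hTyper, hTyI, _, hTyinf, _, _⟩ :=
    Dstruct φ hcont h0 hadd hq hc he h2c hyD.1 hyD.2
  rw [hTyinf]
  have hTyK : Ty ∉ K := by
    intro hk
    have h1 := hy Ty hk
    rw [hTyper, dist_self] at h1
    exact lt_irrefl 0 h1
  have hIoo : Ty ∈ Set.Ioo (T - ε) (T + ε) := by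
    by_contra h
    exact hTyK ⟨hTyI, h⟩
  rw [Real.dist_eq, abs_lt]
  exact ⟨by linarith [hIoo.1], by linarith [hIoo.2]⟩

end aux

set_option maxHeartbeats 1000000 in
/-- The set of periodic non-fixed points of a continuous flow is a countable union
of closed sets on each of which the minimal-period function is continuous. -/
theorem periodic_points_countable_union_closed_period_continuous
    {X : Type*} [MetricSpace X] (φ : ℝ → X → X)
    (hcont : Continuous fun p : ℝ × X => φ p.1 p.2)
    (h0 : ∀ x, φ 0 x = x)
    (hadd : ∀ s t x, φ (s + t) x = φ s (φ t x)) :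
    ∃ C : ℕ → Set X,
      (∀ n, IsClosed (C n)) ∧
      {x | (∃ t > (0 : ℝ), φ t x = x) ∧ ¬ (∀ t, φ t x = x)} = ⋃ n, C n ∧
      ∀ n, ContinuousOn (fun x => sInf {t : ℝ | 0 < t ∧ φ t x = x}) (C n) := by
  classical
  set dec : ℕ → ℚ × ℚ × ℚ × ℚ := ⇑(Denumerable.eqv (ℚ × ℚ × ℚ × ℚ)).symm with hdec
  set P : ℚ × ℚ × ℚ × ℚ → Prop := fun p =>
    0 < p.1 ∧ 0 < p.2.2.1 ∧ 0 < p.2.2.2 ∧ 2 * p.2.2.1 ≤ p.2.1 / 2 with hP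
  set Dset : ℚ × ℚ × ℚ × ℚ → Set X := fun p =>
    {x | (∃ t ∈ Set.Icc (p.1 : ℝ) (p.2.1 : ℝ), φ t x = x) ∧
      ∀ s ∈ Set.Icc (p.2.2.1 : ℝ) ((p.2.1 : ℝ) / 2),
        (p.2.2.2 : ℝ) ≤ dist (φ s x) x} with hDset
  refine ⟨fun n => if P (dec n) then Dset (dec n) else ∅, ?_, ?_, ?_⟩
  · intro n
    dsimp only
    split_ifs with h
    · exact ((closed1 φ hcont _ _).inter (closed2 φ hcont _ _ _))
    · exact isClosed_empty
  · apply Set.Subset.antisymm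
    · rintro x ⟨hper, hnf⟩
      obtain ⟨T, hTpos, hTper, hTmin, -, -⟩ := minper φ hcont h0 hadd hper hnf
      obtain ⟨r, hr1, hr2⟩ := exists_rat_btwn (show T < 2 * T by linarith)
      have hrpos : (0 : ℝ) < r := lt_trans hTpos hr1
      obtain ⟨q, hq1, hq2⟩ := exists_rat_btwn (show (r : ℝ) / 2 < T by linarith)
      obtain ⟨c, hc1, hc2⟩ := exists_rat_btwn
        (show (0 : ℝ) < min ((r : ℝ) / 4) T by positivity)
      have hcr4 : (c : ℝ) < (r : ℝ) / 4 := lt_of_lt_of_le hc2 (min_le_left _ _)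
      have hcT : (c : ℝ) < T := lt_of_lt_of_le hc2 (min_le_right _ _)
      have hcr2 : (c : ℝ) ≤ (r : ℝ) / 2 := by linarith
      -- minimum of the distance function on the compact interval
      have hne : (Set.Icc (c : ℝ) ((r : ℝ) / 2)).Nonempty := ⟨c, le_rfl, hcr2⟩
      have hdc : Continuous (fun s : ℝ => dist (φ s x) x) :=
        (hcont.comp (continuous_id.prodMk continuous_const)).dist continuous_const
      obtain ⟨s₀, hs₀, hmin⟩ := isCompact_Icc.exists_isMinOn hne hdc.continuousOn
      have hs₀pos : 0 < dist (φ s₀ x) x := by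
        refine dist_pos.2 fun h => ?_
        have h1 : T ≤ s₀ := hTmin s₀ (lt_of_lt_of_le hc1 hs₀.1) h
        have h2 : s₀ ≤ (r : ℝ) / 2 := hs₀.2
        linarith
      obtain ⟨e, he1, he2⟩ := exists_rat_btwn hs₀pos
      have hPqrce : P (q, r, c, e) := by
        refine ⟨?_, ?_, ?_, ?_⟩
        · exact_mod_cast lt_trans (by linarith : (0 : ℝ) < (r : ℝ) / 2) hq1
        · exact_mod_cast hc1
        · exact_mod_cast he1
        · have : 2 * (c : ℝ) ≤ (r : ℝ) / 2 := by linarith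
          push_cast
          exact_mod_cast this
      have hxD : x ∈ Dset (q, r, c, e) := by
        constructor
        · exact ⟨T, ⟨hq2.le, hr1.le⟩, hTper⟩
        · intro s hs
          have := isMinOn_iff.1 hmin s hs
          linarith
      refine Set.mem_iUnion.2 ⟨Denumerable.eqv (ℚ × ℚ × ℚ × ℚ) (q, r, c, e), ?_⟩
      have h1 : dec ((Denumerable.eqv (ℚ × ℚ × ℚ × ℚ)) (q, r, c, e)) = (q, r, c, e) :=
        Equiv.symm_apply_apply _ _
      rw [h1, if_pos hPqrce]
      exact hxD
    · rintro x hx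
      obtain ⟨n, hn⟩ := Set.mem_iUnion.1 hx
      by_cases h : P (dec n)
      · rw [if_pos h] at hn
        obtain ⟨hq, hc, he, h2c⟩ := h
        obtain ⟨-, -, -, -, -, -, hper, hnf⟩ := Dstruct φ hcont h0 hadd
          (show (0 : ℝ) < (dec n).1 by exact_mod_cast hq)
          (show (0 : ℝ) < (dec n).2.2.1 by exact_mod_cast hc)
          (show (0 : ℝ) < (dec n).2.2.2 by exact_mod_cast he)
          (show 2 * ((dec n).2.2.1 : ℝ) ≤ ((dec n).2.1 : ℝ) / 2 by
            exact_mod_cast h2c)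
          hn.1 hn.2
        exact ⟨hper, hnf⟩
      · rw [if_neg h] at hn
        exact absurd hn (Set.notMem_empty x)
  · intro n
    dsimp only
    by_cases h : P (dec n)
    · rw [if_pos h]
      obtain ⟨hq, hc, he, h2c⟩ := h
      exact Dcont φ hcont h0 hadd
        (show (0 : ℝ) < (dec n).1 by exact_mod_cast hq)
        (show (0 : ℝ) < (dec n).2.2.1 by exact_mod_cast hc)
        (show (0 : ℝ) < (dec n).2.2.2 by exact_mod_cast he)
        (show 2 * ((dec n).2.2.1 : ℝ) ≤ ((dec n).2.1 : ℝ) / 2 by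
          exact_mod_cast h2c)
    · rw [if_neg h]
      exact continuousOn_empty _
end

section
/- Let (φ_t) be a continuous flow on a metric space X, n ∈ ℤ, and let Fⁿ = {x ∈ X : ∃ t ∈ [2ⁿ, 2^{n+1}], φ_t(x) = x}. If x ∈ Fⁿ \ F^{n-1} and t ∈ (0, 2^{n+1}) satisfies φ_t(x) = x, then t is the minimal positive period of x; moreover the minimal period function T is continuous on Fⁿ \ F^{n-1}. -/
open Filter Topology Set

/-- For a continuous flow, on the set `Fⁿ \ F^{n-1}` (points with some period in
`[2ⁿ, 2^{n+1}]` but none in `[2^{n-1}, 2ⁿ]`), any period `t ∈ (0, 2^{n+1})` is the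
minimal positive period, and the minimal-period function is continuous there. -/
theorem minimal_period_on_dyadic_slice
    {X : Type*} [MetricSpace X] (φ : ℝ → X → X)
    (hcont : Continuous fun p : ℝ × X => φ p.1 p.2)
    (h0 : ∀ x, φ 0 x = x)
    (hadd : ∀ s t x, φ (s + t) x = φ s (φ t x))
    (n : ℤ) :
    (∀ x, x ∈ {x | ∃ t ∈ Set.Icc ((2 : ℝ) ^ n) ((2 : ℝ) ^ (n + 1)), φ t x = x} \
            {x | ∃ t ∈ Set.Icc ((2 : ℝ) ^ (n - 1)) ((2 : ℝ) ^ n), φ t x = x} →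
      ∀ t : ℝ, 0 < t → t < (2 : ℝ) ^ (n + 1) → φ t x = x →
        t = sInf {s : ℝ | 0 < s ∧ φ s x = x}) ∧
    ContinuousOn (fun x => sInf {s : ℝ | 0 < s ∧ φ s x = x})
      ({x | ∃ t ∈ Set.Icc ((2 : ℝ) ^ n) ((2 : ℝ) ^ (n + 1)), φ t x = x} \
       {x | ∃ t ∈ Set.Icc ((2 : ℝ) ^ (n - 1)) ((2 : ℝ) ^ n), φ t x = x}) := by
  have h2ne : (2:ℝ) ≠ 0 := by norm_num
  have hpm : (0:ℝ) < 2 ^ (n-1) := by positivity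
  have hsum : (2:ℝ) ^ (n-1) + 2 ^ (n-1) = 2 ^ n := by
    rw [← two_mul, mul_comm, ← zpow_add_one₀ h2ne, sub_add_cancel]
  have hsum' : (2:ℝ) ^ n + 2 ^ n = 2 ^ (n+1) := by
    rw [← two_mul, mul_comm, ← zpow_add_one₀ h2ne]
  have h2n : (0:ℝ) < 2 ^ n := by positivity
  -- multiples of periods are periods
  have hmul : ∀ (x : X) (s : ℝ), φ s x = x → ∀ k : ℕ, φ (k * s) x = x := by
    intro x s hs k
    induction k with
    | zero => simpa using h0 x
    | succ k ih =>
      have h : ((k+1 : ℕ) : ℝ) * s = s + (k : ℝ) * s := by push_cast; ring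
      rw [h, hadd, ih, hs]
  -- any positive period of a point outside F^{n-1} exceeds 2^n
  have hgap : ∀ x : X,
      x ∉ {x | ∃ t ∈ Set.Icc ((2 : ℝ) ^ (n - 1)) ((2 : ℝ) ^ n), φ t x = x} →
      ∀ s : ℝ, 0 < s → φ s x = x → 2 ^ n < s := by
    intro x hxB s hs hper
    by_contra hle
    push_neg at hle
    rcases le_or_gt ((2:ℝ) ^ (n-1)) s with h1 | h1
    · exact hxB ⟨s, ⟨h1, hle⟩, hper⟩
    · set k := ⌈(2:ℝ) ^ (n-1) / s⌉₊ with hk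
      have hk1 : (2:ℝ) ^ (n-1) / s ≤ (k : ℝ) := Nat.le_ceil _
      have hk2 : (k : ℝ) < 2 ^ (n-1) / s + 1 := Nat.ceil_lt_add_one (by positivity)
      have hks1 : (2:ℝ) ^ (n-1) ≤ (k : ℝ) * s := by
        rw [div_le_iff₀ hs] at hk1; linarith
      have hks2 : (k : ℝ) * s ≤ 2 ^ n := by
        have h3 : (k : ℝ) * s < (2 ^ (n-1) / s + 1) * s :=
          mul_lt_mul_of_pos_right hk2 hs
        have h4 : ((2:ℝ) ^ (n-1) / s + 1) * s = 2 ^ (n-1) + s := by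
          field_simp
        nlinarith
      exact hxB ⟨(k : ℝ) * s, ⟨hks1, hks2⟩, hmul x s hper k⟩
  -- uniqueness of the period in (2^n, 2^{n+1}]
  have huniq : ∀ x : X,
      x ∉ {x | ∃ t ∈ Set.Icc ((2 : ℝ) ^ (n - 1)) ((2 : ℝ) ^ n), φ t x = x} →
      ∀ t t' : ℝ, t ∈ Set.Ioc ((2:ℝ)^n) ((2:ℝ)^(n+1)) →
        t' ∈ Set.Ioc ((2:ℝ)^n) ((2:ℝ)^(n+1)) →
        φ t x = x → φ t' x = x → t = t' := by
    intro x hxB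
    have key : ∀ a b : ℝ, a ∈ Set.Ioc ((2:ℝ)^n) ((2:ℝ)^(n+1)) →
        b ∈ Set.Ioc ((2:ℝ)^n) ((2:ℝ)^(n+1)) →
        φ a x = x → φ b x = x → b < a → False := by
      intro a b ha hb hpa hpb hlt
      have hd : φ (a - b) x = x := by
        have h1 : φ (a - b + b) x = φ (a - b) (φ b x) := hadd _ _ _
        rw [sub_add_cancel, hpa, hpb] at h1
        exact h1.symm
      have h2 := hgap x hxB (a - b) (by linarith) hd
      have := ha.2
      have := hb.1
      linarith
    intro t t' ht ht' hp hp'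
    rcases lt_trichotomy t t' with h | h | h
    · exact absurd (key t' t ht' ht hp' hp h) (fun h => h)
    · exact h
    · exact absurd (key t t' ht ht' hp hp' h) (fun h => h)
  -- the minimal period exists and is the unique period in (2^n, 2^{n+1}]
  have hleast : ∀ x : X,
      x ∈ {x | ∃ t ∈ Set.Icc ((2 : ℝ) ^ n) ((2 : ℝ) ^ (n + 1)), φ t x = x} \
          {x | ∃ t ∈ Set.Icc ((2 : ℝ) ^ (n - 1)) ((2 : ℝ) ^ n), φ t x = x} →
      ∃ t₀ : ℝ, t₀ ∈ Set.Ioc ((2:ℝ)^n) ((2:ℝ)^(n+1)) ∧ φ t₀ x = x ∧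
        IsLeast {s : ℝ | 0 < s ∧ φ s x = x} t₀ := by
    intro x hx
    obtain ⟨t₀, ht₀, hp⟩ := hx.1
    have ht₀pos : 0 < t₀ := lt_of_lt_of_le h2n ht₀.1
    have ht₀' : t₀ ∈ Set.Ioc ((2:ℝ)^n) ((2:ℝ)^(n+1)) :=
      ⟨hgap x hx.2 t₀ ht₀pos hp, ht₀.2⟩
    refine ⟨t₀, ht₀', hp, ⟨ht₀pos, hp⟩, ?_⟩
    intro s hs
    by_contra hlt
    push_neg at hlt
    have hsIoc : s ∈ Set.Ioc ((2:ℝ)^n) ((2:ℝ)^(n+1)) :=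
      ⟨hgap x hx.2 s hs.1 hs.2, le_trans hlt.le ht₀.2⟩
    exact absurd (huniq x hx.2 s t₀ hsIoc ht₀' hs.2 hp) (ne_of_lt hlt)
  constructor
  · -- part 1
    intro x hx t ht0 ht1 hp
    obtain ⟨t₀, ht₀, hp₀, hL⟩ := hleast x hx
    have htIoc : t ∈ Set.Ioc ((2:ℝ)^n) ((2:ℝ)^(n+1)) :=
      ⟨hgap x hx.2 t ht0 hp, ht1.le⟩
    rw [hL.csInf_eq]
    exact huniq x hx.2 t t₀ htIoc ht₀ hp hp₀
  · -- part 2 : continuity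
    intro x₀ hx₀
    obtain ⟨a₀, ha₀, hp₀, hL₀⟩ := hleast x₀ hx₀
    have hx₀B := hx₀.2
    unfold ContinuousWithinAt
    rw [show (fun x => sInf {s : ℝ | 0 < s ∧ φ s x = x}) x₀ = a₀ from hL₀.csInf_eq]
    rw [Filter.tendsto_iff_seq_tendsto]
    intro u hu
    rw [tendsto_nhdsWithin_iff] at hu
    obtain ⟨hu1, hu2⟩ := hu
    rw [eventually_atTop] at hu2
    obtain ⟨N, hN⟩ := hu2
    rw [← tendsto_add_atTop_iff_nat N]
    set w : ℕ → X := fun k => u (k + N) with hw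
    have hw1 : Tendsto w atTop (𝓝 x₀) := hu1.comp (tendsto_add_atTop_nat N)
    have hw2 : ∀ k, w k ∈
        {x | ∃ t ∈ Set.Icc ((2 : ℝ) ^ n) ((2 : ℝ) ^ (n + 1)), φ t x = x} \
        {x | ∃ t ∈ Set.Icc ((2 : ℝ) ^ (n - 1)) ((2 : ℝ) ^ n), φ t x = x} :=
      fun k => hN (k + N) (Nat.le_add_left N k)
    choose a haIoc hap haL using fun k => hleast (w k) (hw2 k)
    have key : Tendsto a atTop (𝓝 a₀) := by
      apply Filter.tendsto_of_subseq_tendsto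
      intro ns hns
      have hsub : ∀ m : ℕ, a (ns m) ∈ Set.Icc ((2:ℝ)^n) ((2:ℝ)^(n+1)) :=
        fun m => ⟨(haIoc (ns m)).1.le, (haIoc (ns m)).2⟩
      obtain ⟨b, hb, ms, hms, hmt⟩ := (isCompact_Icc).tendsto_subseq hsub
      refine ⟨ms, ?_⟩
      have hg : Tendsto (fun m => ns (ms m)) atTop atTop :=
        hns.comp hms.tendsto_atTop
      have hw' : Tendsto (fun m => w (ns (ms m))) atTop (𝓝 x₀) := hw1.comp hg
      have hφt : Tendsto (fun m => φ (a (ns (ms m))) (w (ns (ms m)))) atTop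
          (𝓝 (φ b x₀)) :=
        (hcont.tendsto (b, x₀)).comp (hmt.prodMk_nhds hw')
      have heq : (fun m => φ (a (ns (ms m))) (w (ns (ms m)))) =
          fun m => w (ns (ms m)) := funext fun m => hap (ns (ms m))
      rw [heq] at hφt
      have hbx : φ b x₀ = x₀ := tendsto_nhds_unique hφt hw'
      have hbne : (2:ℝ)^n ≠ b := by
        intro hcontra
        exact hx₀B ⟨b, ⟨by rw [← hcontra]; linarith, le_of_eq hcontra.symm⟩, hbx⟩
      have hbIoc : b ∈ Set.Ioc ((2:ℝ)^n) ((2:ℝ)^(n+1)) :=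
        ⟨lt_of_le_of_ne hb.1 hbne, hb.2⟩
      have hba : b = a₀ := huniq x₀ hx₀B b a₀ hbIoc ha₀ hbx hp₀
      rw [← hba]
      exact hmt
    refine key.congr fun k => ?_
    exact ((haL k).csInf_eq).symm
end

section
/- Let h : M × M → ℝ satisfy the triangle inequality, with A = {x : h(x, x) = 0}, and suppose for each pair of functions u₁, u₂ : M → ℝ we have u_i(y) − u_i(x) ≤ h(x, y) for all x, y (i = 1, 2). Then for all x, y ∈ A, (u₁ − u₂)(y) − (u₁ − u₂)(x) ≤ h(x, y) + h(y, x) = δ_M(x, y); moreover δ_M(x, y) equals the supremum of (u₁ − u₂)(y) − (u₁ − u₂)(x) over all such pairs (u₁, u₂), the supremum being attained by u₁ = h(x, ·) and u₂ = h(y, ·). -/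
/-- Representation of the Mather semi-distance on the projected Aubry set:
for dominated functions `u₁, u₂` (i.e. `uᵢ y - uᵢ x ≤ h x y`), the difference of
increments is bounded by `δ_M (x,y) = h x y + h y x`, and the bound is attained
by `u₁ = h x ·`, `u₂ = h y ·`. -/
theorem mather_distance_representation
    {M : Type*} (h : M → M → ℝ)
    (htri : ∀ x y z, h x z ≤ h x y + h y z)
    (x y : M) (hx : h x x = 0) (hy : h y y = 0) :
    (∀ u₁ u₂ : M → ℝ,
      (∀ a b, u₁ b - u₁ a ≤ h a b) → (∀ a b, u₂ b - u₂ a ≤ h a b) →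
      (u₁ y - u₂ y) - (u₁ x - u₂ x) ≤ h x y + h y x) ∧
    ((∀ a b, h x b - h x a ≤ h a b) ∧ (∀ a b, h y b - h y a ≤ h a b) ∧
      (h x y - h y y) - (h x x - h y x) = h x y + h y x) := by
  refine ⟨fun u₁ u₂ h1 h2 => ?_, fun a b => ?_, fun a b => ?_, by linarith⟩
  · have := h1 x y; have := h2 y x; linarith
  · have := htri x a b; linarith
  · have := htri y a b; linarith
end

section
/- Let h : M × M → ℝ satisfy the triangle inequality, let A = {x : h(x,x) = 0} and δ_M(x,y) = h(x,y) + h(y,x). If any two functions of the form h(x, ·), x ∈ M, differ by a constant, then δ_M(x₁, x₂) = 0 for all x₁, x₂ ∈ A. Conversely, if δ_M vanishes identically on A × A, then u₁ − u₂ is constant on A for any two functions u₁, u₂ satisfying uᵢ(y) − uᵢ(x) ≤ h(x,y) for all x, y. -/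
/-- If all weak KAM solutions `h (x, ·)` differ by constants, then the Mather
semi-distance vanishes on the projected Aubry set `A = {x | h x x = 0}`;
conversely, if `δ_M` vanishes on `A × A`, then any two dominated functions
differ by a constant on `A`. -/
theorem mather_quotient_trivial_iff_weakKAM_unique
    {M : Type*} (h : M → M → ℝ)
    (htri : ∀ x y z, h x z ≤ h x y + h y z)
    (hnonneg : ∀ x, 0 ≤ h x x) :
    ((∀ x y : M, ∃ c : ℝ, ∀ z, h x z = c + h y z) →
      ∀ x₁ x₂ : M, h x₁ x₁ = 0 → h x₂ x₂ = 0 → h x₁ x₂ + h x₂ x₁ = 0) ∧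
    ((∀ x₁ x₂ : M, h x₁ x₁ = 0 → h x₂ x₂ = 0 → h x₁ x₂ + h x₂ x₁ = 0) →
      ∀ u₁ u₂ : M → ℝ,
        (∀ a b, u₁ b - u₁ a ≤ h a b) → (∀ a b, u₂ b - u₂ a ≤ h a b) →
        ∃ c : ℝ, ∀ x, h x x = 0 → u₁ x - u₂ x = c) := by
  constructor
  · intro H x₁ x₂ h1 h2
    obtain ⟨c, hc⟩ := H x₁ x₂
    have e1 := hc x₁
    have e2 := hc x₂
    rw [h1] at e1
    rw [h2] at e2
    linarith
  · intro H u₁ u₂ d1 d2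
    by_cases hA : ∃ x₀ : M, h x₀ x₀ = 0
    · obtain ⟨x₀, hx₀⟩ := hA
      refine ⟨u₁ x₀ - u₂ x₀, fun x hx => ?_⟩
      have hδ := H x x₀ hx hx₀
      have a1 := d1 x₀ x
      have a2 := d1 x x₀
      have b1 := d2 x₀ x
      have b2 := d2 x x₀
      linarith
    · exact ⟨0, fun x hx => absurd ⟨x, hx⟩ hA⟩
end

section
/- Let (φ_t) be a continuous flow on a compact metric space X. If every point of X is chain-recurrent for (φ_t), then (φ_t) is chain-transitive if and only if X is connected. -/
/-- An `(ε, T)`-chain from `x` to `y` for the flow `φ`: finitely many points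
`x = c 0, …, c k = y` with jump times `ts i ≥ T` and
`dist (φ (ts i) (c i)) (c (i+1)) < ε`. -/
def FlowChain {X : Type*} [MetricSpace X] (φ : ℝ → X → X) (ε T : ℝ) (x y : X) : Prop :=
  ∃ (k : ℕ) (c : ℕ → X) (ts : ℕ → ℝ), 1 ≤ k ∧ c 0 = x ∧ c k = y ∧
    ∀ i < k, T ≤ ts i ∧ dist (φ (ts i) (c i)) (c (i + 1)) < ε

theorem FlowChain.trans {X : Type*} [MetricSpace X] {φ : ℝ → X → X} {ε T : ℝ} {x y z : X}
    (h1 : FlowChain φ ε T x y) (h2 : FlowChain φ ε T y z) : FlowChain φ ε T x z := by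
  obtain ⟨k₁, c₁, t₁, hk₁, hc₁0, hc₁k, H₁⟩ := h1
  obtain ⟨k₂, c₂, t₂, hk₂, hc₂0, hc₂k, H₂⟩ := h2
  refine ⟨k₁ + k₂, fun i => if i ≤ k₁ then c₁ i else c₂ (i - k₁),
    fun i => if i < k₁ then t₁ i else t₂ (i - k₁), by omega, by simpa, ?_, ?_⟩
  · beta_reduce
    rw [if_neg (by omega)]
    simpa using hc₂k
  · intro i hi
    beta_reduce
    by_cases h : i < k₁
    · rw [if_pos h, if_pos (by omega), if_pos (by omega)]
      exact H₁ i h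
    · have hik : k₁ ≤ i := not_lt.mp h
      have hc : (if i ≤ k₁ then c₁ i else c₂ (i - k₁)) = c₂ (i - k₁) := by
        by_cases he : i = k₁
        · subst he
          rw [if_pos le_rfl, Nat.sub_self, hc₂0, hc₁k]
        · rw [if_neg (by omega)]
      rw [if_neg h, hc, if_neg (by omega)]
      have : i + 1 - k₁ = (i - k₁) + 1 := by omega
      rw [this]
      exact H₂ (i - k₁) (by omega)

/-- If every point of a compact metric space is chain-recurrent for a continuous
flow, then the flow is chain-transitive iff the space is connected. -/
theorem chain_transitive_iff_connected_of_all_chain_recurrent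
    {X : Type*} [MetricSpace X] [CompactSpace X] [Nonempty X]
    (φ : ℝ → X → X)
    (hcont : Continuous fun p : ℝ × X => φ p.1 p.2)
    (h0 : ∀ x, φ 0 x = x)
    (hadd : ∀ s t x, φ (s + t) x = φ s (φ t x))
    (hrec : ∀ x : X, ∀ ε > (0 : ℝ), ∀ T > (0 : ℝ), FlowChain φ ε T x x) :
    (∀ x y : X, ∀ ε > (0 : ℝ), ∀ T > (0 : ℝ), FlowChain φ ε T x y) ↔
      ConnectedSpace X := by
  constructor
  · intro h
    refine { toNonempty := ‹_›, isPreconnected_univ := ?_ }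
    rintro u v hu hv hcov ⟨a, -, hau⟩ ⟨b, -, hbv⟩
    by_contra hne
    rw [Set.univ_inter] at hne
    have huv : u ∩ v = ∅ := Set.not_nonempty_iff_eq_empty.mp hne
    have hcover : ∀ p : X, p ∈ u ∨ p ∈ v := fun p => hcov (Set.mem_univ p)
    have hcompl : uᶜ = v := by
      ext p
      constructor
      · intro hp; exact (hcover p).resolve_left hp
      · intro hp hpu
        exact absurd (huv ▸ Set.mem_inter hpu hp) (Set.notMem_empty p)
    have hclosedu : IsClosed u := by
      rw [← isOpen_compl_iff, hcompl]; exact hv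
    have hclosedc : IsClosed uᶜ := hu.isClosed_compl
    have hbc : b ∈ uᶜ := hcompl ▸ hbv
    -- flow-invariance of the clopen set u
    have hinv : ∀ (t : ℝ) (p : X), p ∈ u → φ t p ∈ u := by
      intro t p hp
      have hg : Continuous fun s : ℝ => φ s p :=
        hcont.comp (continuous_id.prodMk continuous_const)
      have hS : IsClopen ((fun s : ℝ => φ s p) ⁻¹' u) :=
        ⟨hclosedu.preimage hg, hu.preimage hg⟩
      have hSuniv : ((fun s : ℝ => φ s p) ⁻¹' u) = Set.univ :=
        hS.eq_univ ⟨0, show φ 0 p ∈ u by rw [h0]; exact hp⟩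
      exact Set.eq_univ_iff_forall.mp hSuniv t
    -- positive distance from u to its complement
    have hucomp : IsCompact u := hclosedu.isCompact
    obtain ⟨p₀, hp₀u, hp₀min'⟩ :=
      hucomp.exists_isMinOn ⟨a, hau⟩
        ((Metric.continuous_infDist_pt (uᶜ)).continuousOn)
    have hp₀min : ∀ p ∈ u, Metric.infDist p₀ uᶜ ≤ Metric.infDist p uᶜ :=
      fun p hp => hp₀min' hp
    set ε := Metric.infDist p₀ uᶜ with hε
    have hεpos : 0 < ε := by
      rw [hε]
      exact (hclosedc.notMem_iff_infDist_pos ⟨b, hbc⟩).mp (by simp [hp₀u])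
    have hstep : ∀ p ∈ u, ∀ q : X, dist p q < ε → q ∈ u := by
      intro p hp q hq
      by_contra hqu
      have hqc : q ∈ uᶜ := hqu
      have h1 : Metric.infDist p uᶜ ≤ dist p q := Metric.infDist_le_dist_of_mem hqc
      have h2 : ε ≤ Metric.infDist p uᶜ := hp₀min p hp
      linarith
    obtain ⟨k, c, ts, hk, hc0, hck, H⟩ := h a b ε hεpos 1 one_pos
    have hall : ∀ i, i ≤ k → c i ∈ u := by
      intro i
      induction i with
      | zero => intro _; rw [hc0]; exact hau
      | succ n ih =>
        intro hn
        have hcn : c n ∈ u := ih (by omega)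
        exact hstep _ (hinv (ts n) _ hcn) _ (H n (by omega)).2
    have hbu : b ∈ u := hck ▸ hall k le_rfl
    exact absurd (huv ▸ Set.mem_inter hbu hbv) (Set.notMem_empty b)
  · intro hconn x y ε hε T hT
    haveI := hconn
    set A := {z : X | FlowChain φ ε T x z} with hA
    have hxA : x ∈ A := hrec x ε hε T hT
    have hopen : IsOpen A := by
      rw [Metric.isOpen_iff]
      intro z hz
      obtain ⟨k, c, ts, hk, hc0, hck, H⟩ := hz
      have hd : dist (φ (ts (k - 1)) (c (k - 1))) (c k) < ε := by
        have := (H (k - 1) (by omega)).2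
        rwa [show k - 1 + 1 = k by omega] at this
      refine ⟨ε - dist (φ (ts (k - 1)) (c (k - 1))) (c k), by linarith, ?_⟩
      intro w hw
      rw [Metric.mem_ball] at hw
      refine ⟨k, fun i => if i = k then w else c i, ts, hk, ?_, if_pos rfl, ?_⟩
      · beta_reduce
        rw [if_neg (show ¬(0 = k) by omega)]; exact hc0
      · intro i hi
        refine ⟨(H i hi).1, ?_⟩
        beta_reduce
        rw [if_neg (show ¬(i = k) by omega)]
        by_cases he : i + 1 = k
        · rw [if_pos he]
          have hik : i = k - 1 := by omega
          subst hik
          calc dist (φ (ts (k - 1)) (c (k - 1))) w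
              ≤ dist (φ (ts (k - 1)) (c (k - 1))) (c k) + dist (c k) w := dist_triangle _ _ _
            _ < ε := by
                have : dist (c k) w = dist w z := by rw [dist_comm, hck]
                linarith [this ▸ hw]
        · rw [if_neg he]
          exact (H i hi).2
    have hclosed : IsClosed A := by
      refine isClosed_of_closure_subset ?_
      intro z hz
      obtain ⟨k, c, ts, hk, hc0', hck', H⟩ := hrec z (ε / 2) (by linarith) T hT
      have hgc : Continuous fun w : X => φ (ts 0) w :=
        hcont.comp (continuous_const.prodMk continuous_id)
      obtain ⟨δ, hδ, hδ'⟩ := Metric.continuous_iff.mp hgc z (ε / 2) (by linarith)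
      obtain ⟨w, hwA, hwz⟩ := Metric.mem_closure_iff.mp hz δ hδ
      have hchain2 : FlowChain φ ε T w z := by
        refine ⟨k, fun i => if i = 0 then w else c i, ts, hk, if_pos rfl, ?_, ?_⟩
        · beta_reduce
          rw [if_neg (show ¬(k = 0) by omega)]; exact hck'
        · intro i hi
          refine ⟨(H i hi).1, ?_⟩
          beta_reduce
          by_cases h : i = 0
          · subst h
            rw [if_pos rfl, if_neg (show ¬(0 + 1 = 0) by omega)]
            have h1 : dist (φ (ts 0) w) (φ (ts 0) z) < ε / 2 := hδ' w (by rwa [dist_comm])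
            have h2 : dist (φ (ts 0) z) (c 1) < ε / 2 := by
              have := (H 0 (by omega)).2
              rwa [hc0'] at this
            calc dist (φ (ts 0) w) (c 1)
                ≤ dist (φ (ts 0) w) (φ (ts 0) z) + dist (φ (ts 0) z) (c 1) := dist_triangle _ _ _
              _ < ε := by linarith
          · rw [if_neg h, if_neg (show ¬(i + 1 = 0) by omega)]
            exact lt_of_lt_of_le (H i hi).2 (by linarith)
      exact FlowChain.trans hwA hchain2
    have hAuniv : A = Set.univ := (IsClopen.eq_univ ⟨hclosed, hopen⟩) ⟨x, hxA⟩
    exact Set.eq_univ_iff_forall.mp hAuniv y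
end
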